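/- For every real x with −1/√2 < x < −1/2, the set {(a,b) ∈ ℝ² : a ≥ b > 0, ab ≥ 1, Φ₁(a,b) = x} is compact. -/

import Mathlib

open Real Filter

/-- Complete elliptic integral of the first kind, `K(m)`. -/
noncomputable def ellK (m : ℝ) : ℝ :=
  ∫ t in (0:ℝ)..(π/2), 1 / Real.sqrt (1 - m * Real.sin t ^ 2)

/-- Complete elliptic integral of the second kind, `E(m)`. -/
noncomputable def ellE (m : ℝ) : ℝ :=
  ∫ t in (0:ℝ)..(π/2), Real.sqrt (1 - m * Real.sin t ^ 2)

/-- Complete elliptic integral of the third kind, `Π(n, m)`. -/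
noncomputable def ellPi (n m : ℝ) : ℝ :=
  ∫ t in (0:ℝ)..(π/2), 1 / ((1 - n * Real.sin t ^ 2) * Real.sqrt (1 - m * Real.sin t ^ 2))

/-- The constant `μ(a,b)`. -/
noncomputable def muC (a b : ℝ) : ℝ :=
  Real.sqrt ((a + b + Real.sqrt (4 + (a - b) ^ 2)) / 2)

/-- The constant `ν(a,b)`. -/
noncomputable def nuC (a b : ℝ) : ℝ :=
  Real.sqrt ((a + b - Real.sqrt (4 + (a - b) ^ 2)) / 2)

/-- First component `Φ₁` of the period map. -/
noncomputable def Phi1 (a b : ℝ) : ℝ :=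
  muC a b * ellPi ((a - b) / (a - muC a b ^ 2)) ((a - b) / a) /
    (π * Real.sqrt a * (a - muC a b ^ 2))

/-- Second component `Φ₂` of the period map. -/
noncomputable def Phi2 (a b : ℝ) : ℝ :=
  nuC a b * ellPi ((a - b) / (a - nuC a b ^ 2)) ((a - b) / a) /
    (π * Real.sqrt a * (a - nuC a b ^ 2))

/-- The parameter domain `Σ = {(a,b) : a > b, ab > 1}`. -/
def SigmaSet : Set (ℝ × ℝ) := {p | p.1 > p.2 ∧ p.1 * p.2 > 1}

/-- The domain `Ω̃ = {(x,y) : -1/√2 < x < -1/2, x² + y² < 1/2, y > 0}`. -/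
def OmegaSet : Set (ℝ × ℝ) :=
  {p | -(1 / Real.sqrt 2) < p.1 ∧ p.1 < -(1/2) ∧ p.1 ^ 2 + p.2 ^ 2 < 1/2 ∧ p.2 > 0}

open Topology

/-!
Write `c = μ² - a`, so that `c (c + a - b) = 1`, `κ = (a - b) / c` and `m = (a - b) / a`. Then
`-2 Φ₁ = √(1 + c/a) · 2 Π(-κ, m) / (π c)`, and `∫₀^{π/2} dt / (1 + κ sin² t) = π / (2 √(1 + κ))`
is exactly `π c / 2`. So `-2 Φ₁` is at most `√(1 + 1/a)` times a bound for the remaining factor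
`(1 - m sin² t)^{-1/2}` of the integrand of `Π(-κ, m)`. When `b ≥ θ a` that factor is at most
`θ^{-1/2}`. When `b < θ a`, `κ ≥ (1 - θ) a` is large, and splitting the integral at
`sin² t = a^{-1/2}` leaves a remainder of at most `√a K(m) / κ`, which is `O(log a / √a)` relative
to `π c / 2` because `K(m) ≤ π/2 (1 + log a)` when `ab ≥ 1`. Hence for `x < -1/2` the fibre
`Φ₁ = x` is bounded, and it is closed because `Φ₁` is continuous.
-/

lemma one_sub_mul_sin_sq_pos {m : ℝ} (hm : m < 1) (t : ℝ) : 0 < 1 - m * sin t ^ 2 := by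
  rcases le_or_gt m 0 with h | h
  · nlinarith [sq_nonneg (sin t)]
  · nlinarith [sin_sq_le_one t]

lemma one_add_mul_sin_sq_pos {κ : ℝ} (hκ : -1 < κ) (t : ℝ) : 0 < 1 + κ * sin t ^ 2 := by
  simpa using one_sub_mul_sin_sq_pos (m := -κ) (by linarith) t

lemma continuous_inv_sqrt_one_sub_mul_sin_sq {m : ℝ} (hm : m < 1) :
    Continuous fun t => 1 / √(1 - m * sin t ^ 2) :=
  continuous_const.div (by fun_prop) fun t => (sqrt_pos.2 (one_sub_mul_sin_sq_pos hm t)).ne'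

lemma continuous_inv_one_add_mul_sin_sq {κ : ℝ} (hκ : -1 < κ) :
    Continuous fun t => 1 / (1 + κ * sin t ^ 2) :=
  continuous_const.div (by fun_prop) fun t => (one_add_mul_sin_sq_pos hκ t).ne'

lemma integral_inv_one_add_mul_sin_sq {κ : ℝ} (hκ : -1 < κ) :
    ∫ t in (0:ℝ)..π/2, 1 / (1 + κ * sin t ^ 2) = π / (2 * √(1 + κ)) := by
  set s := √(1 + κ)
  have hs : 0 < s := sqrt_pos.2 (by linarith)
  have hs2 : s ^ 2 = 1 + κ := sq_sqrt (by linarith)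
  have hD : ∀ t, 0 < cos t ^ 2 + s * sin t ^ 2 := fun t => by
    nlinarith [sin_sq_add_cos_sq t, sq_nonneg (cos t), mul_nonneg hs.le (sq_nonneg (sin t))]
  -- `arctan (s tan t) / s`, rewritten so as to stay smooth across `t = π/2`
  have hF : ∀ t, HasDerivAt
      (fun t => (t + arctan ((s - 1) * sin t * cos t / (cos t ^ 2 + s * sin t ^ 2))) / s)
      (1 / (1 + κ * sin t ^ 2)) t := by
    intro t
    have h := (((hasDerivAt_id t).add (((((hasDerivAt_sin t).const_mul (s - 1)).mul
      (hasDerivAt_cos t)).div (((hasDerivAt_cos t).pow 2).add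
        (((hasDerivAt_sin t).pow 2).const_mul s)) (hD t).ne').arctan)).div_const s)
    refine h.congr_deriv ?_
    have hpos := one_add_mul_sin_sq_pos hκ t
    have hDt := hD t
    have hsc := sin_sq_add_cos_sq t
    simp only [Pi.add_apply, Pi.mul_apply, Pi.div_apply, Pi.pow_apply, Nat.cast_ofNat]
    field_simp
    rw [eq_div_iff (by linarith)]
    norm_num
    linear_combination s * sin t ^ 2 * (sin t ^ 2 + cos t ^ 2) * (κ * hsc - hs2)
  rw [intervalIntegral.integral_eq_sub_of_hasDerivAt (fun t _ => hF t)
    ((continuous_inv_one_add_mul_sin_sq hκ).intervalIntegrable _ _)]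
  simp
  field_simp

lemma ellK_le {m : ℝ} (hm0 : 0 ≤ m) (hm1 : m < 1) :
    ellK m ≤ π / 2 * (1 - log (1 - m) / 2) := by
  have hpi := pi_pos
  set r := √(1 - m)
  have hr0 : 0 < r := sqrt_pos.2 (by linarith)
  have hr1 : r ≤ 1 := sqrt_le_one.2 (by linarith)
  have hr2 : r ^ 2 = 1 - m := sq_sqrt (by linarith)
  set t₁ := π / 2 * (1 - r)
  have ht₁0 : 0 ≤ t₁ := by positivity
  have ht₁ : t₁ ≤ π / 2 := by simp only [t₁]; nlinarith
  have hlin : ∀ t ∈ Set.Icc 0 t₁, r ≤ 1 - 2 / π * t := fun t ht => by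
    have : 2 / π * t ≤ 2 / π * t₁ := by gcongr; exact ht.2
    have : 2 / π * t₁ = 1 - r := by simp only [t₁]; field_simp
    linarith
  have hint :=
    (continuous_inv_sqrt_one_sub_mul_sin_sq hm1).intervalIntegrable (μ := MeasureTheory.volume)
  -- Jordan's inequality `1 - 2t/π ≤ cos t` makes the integrand at most `1 / (1 - 2t/π)`
  have head : ∫ t in 0..t₁, 1 / √(1 - m * sin t ^ 2) ≤ -(π / 4) * log (1 - m) := by
    have hprim : ∫ t in 0..t₁, 1 / (1 - 2 / π * t) = -(π / 4) * log (1 - m) := by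
      have hend : 1 - 2 / π * t₁ = r := by simp only [t₁]; field_simp; ring
      have hlog : log r = log (1 - m) / 2 := log_sqrt (by linarith)
      rw [intervalIntegral.integral_comp_sub_mul (fun x => 1 / x) (by positivity) 1, mul_zero,
        sub_zero, hend, integral_one_div_of_pos hr0 one_pos, one_div, log_inv, hlog]
      simp only [smul_eq_mul]
      field_simp
      ring
    refine (intervalIntegral.integral_mono_on ht₁0 (hint 0 t₁) ?_ fun t ht => ?_).trans_eq hprim
    · refine ContinuousOn.intervalIntegrable ?_
      refine continuousOn_const.div (by fun_prop) fun t ht => ?_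
      rw [Set.uIcc_of_le ht₁0] at ht
      linarith [hlin t ht]
    · have hpos := hlin t ht
      have hcos := one_sub_mul_le_cos ht.1 (ht.2.trans ht₁)
      have : (1 - 2 / π * t) ^ 2 ≤ 1 - m * sin t ^ 2 := by
        nlinarith [sin_sq_add_cos_sq t, sin_sq_le_one t, sq_nonneg (sin t)]
      gcongr
      · linarith
      · exact le_sqrt_of_sq_le this
  have tail : ∫ t in t₁..π / 2, 1 / √(1 - m * sin t ^ 2) ≤ π / 2 := by
    have hconst : ∫ _ in t₁..π / 2, 1 / r = π / 2 := by
      simp only [intervalIntegral.integral_const, smul_eq_mul]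
      field_simp
      ring
    refine (intervalIntegral.integral_mono_on ht₁ (hint t₁ (π / 2))
      intervalIntegrable_const fun t _ => ?_).trans_eq hconst
    gcongr
    exact le_sqrt_of_sq_le (by nlinarith [sin_sq_le_one t, sq_nonneg (sin t)])
  rw [ellK, ← intervalIntegral.integral_add_adjacent_intervals (hint 0 t₁) (hint t₁ (π / 2))]
  linarith

lemma ellPi_neg_eq (κ m : ℝ) :
    ellPi (-κ) m = ∫ t in 0..π / 2, 1 / (1 + κ * sin t ^ 2) * (1 / √(1 - m * sin t ^ 2)) := by
  simp only [ellPi, one_div_mul_one_div, neg_mul, sub_neg_eq_add]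

lemma ellPi_neg_le {κ m : ℝ} (hκ : -1 < κ) (hm0 : 0 ≤ m) (hm1 : m < 1) :
    ellPi (-κ) m ≤ π / (2 * √(1 + κ)) * (1 / √(1 - m)) := by
  have hcont := continuous_inv_one_add_mul_sin_sq hκ
  rw [ellPi_neg_eq, ← integral_inv_one_add_mul_sin_sq hκ, ← intervalIntegral.integral_mul_const]
  refine intervalIntegral.integral_mono_on (by positivity)
    ((hcont.mul (continuous_inv_sqrt_one_sub_mul_sin_sq hm1)).intervalIntegrable _ _)
    ((hcont.mul continuous_const).intervalIntegrable _ _) fun t _ => ?_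
  have hpos := one_add_mul_sin_sq_pos hκ t
  gcongr
  nlinarith [sin_sq_le_one t]

lemma ellPi_neg_le_add {κ m s : ℝ} (hκ : 0 < κ) (hm1 : m < 1) (hs0 : 0 < s) (hs1 : s < 1) :
    ellPi (-κ) m ≤ π / (2 * √(1 + κ)) * (1 / √(1 - s)) + ellK m / (κ * s) := by
  have hA := continuous_inv_one_add_mul_sin_sq (κ := κ) (by linarith)
  have hB := continuous_inv_sqrt_one_sub_mul_sin_sq hm1
  have hA0 : ∀ t, 0 ≤ 1 / (1 + κ * sin t ^ 2) := fun t =>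
    (one_div_pos.2 (one_add_mul_sin_sq_pos (by linarith) t)).le
  have hB0 : ∀ t, 0 ≤ 1 / √(1 - m * sin t ^ 2) := fun t => by positivity
  set t₀ := arcsin √s
  have ht₀0 : 0 ≤ t₀ := arcsin_nonneg.2 (sqrt_nonneg s)
  have ht₀ : t₀ ≤ π / 2 := arcsin_le_pi_div_two _
  have hsin : sin t₀ ^ 2 = s := by
    rw [sin_arcsin (by linarith [sqrt_nonneg s]) (sqrt_le_one.2 hs1.le), sq_sqrt hs0.le]
  have hsin_le : ∀ t ∈ Set.Icc 0 t₀, sin t ^ 2 ≤ s := fun t ht => hsin ▸ pow_le_pow_left₀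
    (sin_nonneg_of_nonneg_of_le_pi ht.1 (by linarith [ht.2]))
    (sin_le_sin_of_le_of_le_pi_div_two (by linarith [ht.1]) ht₀ ht.2) 2
  have hsin_ge : ∀ t ∈ Set.Icc t₀ (π / 2), s ≤ sin t ^ 2 := fun t ht => hsin ▸ pow_le_pow_left₀
    (sin_nonneg_of_nonneg_of_le_pi ht₀0 (by linarith))
    (sin_le_sin_of_le_of_le_pi_div_two (by linarith) ht.2 ht.1) 2
  have hint (a b : ℝ) : IntervalIntegrable
      (fun t => 1 / (1 + κ * sin t ^ 2) * (1 / √(1 - m * sin t ^ 2))) MeasureTheory.volume a b :=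
    (hA.mul hB).intervalIntegrable a b
  have head : ∫ t in 0..t₀, 1 / (1 + κ * sin t ^ 2) * (1 / √(1 - m * sin t ^ 2))
      ≤ π / (2 * √(1 + κ)) * (1 / √(1 - s)) := by
    calc _ ≤ ∫ t in 0..t₀, 1 / (1 + κ * sin t ^ 2) * (1 / √(1 - s)) := by
          refine intervalIntegral.integral_mono_on ht₀0 (hint _ _)
            ((hA.mul continuous_const).intervalIntegrable _ _) fun t ht => ?_
          have := hsin_le t ht
          gcongr
          rcases le_or_gt m 0 with h | h <;> nlinarith [sin_sq_le_one t, sq_nonneg (sin t)]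
      _ ≤ _ := by
          rw [intervalIntegral.integral_mul_const, ← integral_inv_one_add_mul_sin_sq (by linarith)]
          gcongr
          exact intervalIntegral.integral_mono_interval le_rfl ht₀0 ht₀
            (Eventually.of_forall hA0) (hA.intervalIntegrable _ _)
  have tail : ∫ t in t₀..π / 2, 1 / (1 + κ * sin t ^ 2) * (1 / √(1 - m * sin t ^ 2))
      ≤ ellK m / (κ * s) := by
    calc _ ≤ ∫ t in t₀..π / 2, 1 / (κ * s) * (1 / √(1 - m * sin t ^ 2)) := by
          refine intervalIntegral.integral_mono_on ht₀ (hint _ _)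
            ((continuous_const.mul hB).intervalIntegrable _ _) fun t ht => ?_
          have := hsin_ge t ht
          gcongr
          nlinarith
      _ ≤ _ := by
          rw [intervalIntegral.integral_const_mul, one_div_mul_eq_div]
          gcongr
          exact intervalIntegral.integral_mono_interval ht₀0 ht₀ le_rfl
            (Eventually.of_forall hB0) (hB.intervalIntegrable _ _)
  rw [ellPi_neg_eq, ← intervalIntegral.integral_add_adjacent_intervals (hint 0 t₀) (hint t₀ _)]
  exact add_le_add head tail

lemma continuousOn_ellPi :
    ContinuousOn (fun p : ℝ × ℝ => ellPi p.1 p.2) {p | p.1 < 1 ∧ p.2 < 1} := by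
  rw [continuousOn_iff_continuous_domRestrict]
  refine intervalIntegral.continuous_parametric_intervalIntegral_of_continuous'
    (continuous_const.div (by fun_prop) ?_) _ _
  rintro ⟨⟨⟨n, m⟩, hn, hm⟩, t⟩
  exact (mul_pos (one_sub_mul_sin_sq_pos hn t) (sqrt_pos.2 (one_sub_mul_sin_sq_pos hm t))).ne'

/-- `μ(a,b)² - a`, the positive root of `c (c + a - b) = 1`. -/
noncomputable def muGap (a b : ℝ) : ℝ := (√(4 + (a - b) ^ 2) - (a - b)) / 2

lemma muGap_pos (a b : ℝ) : 0 < muGap a b := by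
  have : a - b < √(4 + (a - b) ^ 2) := lt_sqrt_of_sq_lt (by linarith)
  unfold muGap; linarith

lemma muGap_mul_add (a b : ℝ) : muGap a b * (muGap a b + (a - b)) = 1 := by
  have := sq_sqrt (by positivity : (0 : ℝ) ≤ 4 + (a - b) ^ 2)
  unfold muGap; linear_combination this / 4

lemma muGap_le_one {a b : ℝ} (h : b ≤ a) : muGap a b ≤ 1 := by
  nlinarith [muGap_mul_add a b, muGap_pos a b]

lemma muC_eq_sqrt (a b : ℝ) : muC a b = √(a + muGap a b) := by
  unfold muC muGap; ring_nf

lemma sub_muC_sq {a : ℝ} (ha : 0 ≤ a) (b : ℝ) : a - muC a b ^ 2 = -muGap a b := by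
  have := muGap_pos a b
  rw [muC_eq_sqrt, sq_sqrt (by positivity)]
  ring

lemma sqrt_one_add_div_muGap (a b : ℝ) : √(1 + (a - b) / muGap a b) = 1 / muGap a b := by
  have hc := muGap_pos a b
  rw [← sqrt_sq (one_div_pos.2 hc).le]
  congr 1
  field_simp
  linear_combination muGap_mul_add a b

lemma neg_two_mul_Phi1_eq {a b : ℝ} (ha : 0 < a) :
    -2 * Phi1 a b = √(1 + muGap a b / a) *
      (2 / (π * muGap a b) * ellPi (-((a - b) / muGap a b)) ((a - b) / a)) := by
  have hμ : muC a b = √a * √(1 + muGap a b / a) := by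
    rw [muC_eq_sqrt, ← sqrt_mul ha.le]; congr 1; field_simp
  rw [Phi1, sub_muC_sq ha.le, div_neg, hμ]
  field_simp

lemma neg_two_mul_Phi1_le_sqrt_div {a b : ℝ} (hb : 0 < b) (hba : b ≤ a) :
    -2 * Phi1 a b ≤ √((a + 1) / b) := by
  have ha : 0 < a := hb.trans_le hba
  have hc := muGap_pos a b
  have hP := ellPi_neg_le (κ := (a - b) / muGap a b) (m := (a - b) / a)
    (by linarith [div_nonneg (sub_nonneg.2 hba) hc.le]) (div_nonneg (sub_nonneg.2 hba) ha.le)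
    ((div_lt_one ha).2 (by linarith))
  rw [sqrt_one_add_div_muGap, show 1 - (a - b) / a = b / a by field_simp; ring] at hP
  rw [neg_two_mul_Phi1_eq ha]
  calc _ ≤ √(1 + muGap a b / a) *
        (2 / (π * muGap a b) * (π / (2 * (1 / muGap a b)) * (1 / √(b / a)))) := by
        gcongr
    _ = √((a + muGap a b) / b) := by
        rw [sqrt_div' _ ha.le, sqrt_div' _ hb.le, show 1 + muGap a b / a = (a + muGap a b) / a by
          field_simp, sqrt_div' _ ha.le]
        field_simp
    _ ≤ √((a + 1) / b) := by gcongr; exact muGap_le_one hba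

lemma neg_two_mul_Phi1_le_of_lt {a b s : ℝ} (hb : 0 < b) (hba : b < a) (hab : 1 ≤ a * b)
    (hs0 : 0 < s) (hs1 : s < 1) :
    -2 * Phi1 a b ≤ √(1 + 1 / a) * (1 / √(1 - s) + (1 + log a) / ((a - b) * s)) := by
  have ha : 0 < a := hb.trans hba
  have ha1 : 1 < a := by nlinarith
  have hc := muGap_pos a b
  have hd : 0 < a - b := sub_pos.2 hba
  have hm0 : 0 ≤ (a - b) / a := div_nonneg hd.le ha.le
  have hm1 : (a - b) / a < 1 := (div_lt_one ha).2 (by linarith)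
  have hP := ellPi_neg_le_add (div_pos hd hc) hm1 hs0 hs1
  rw [sqrt_one_add_div_muGap] at hP
  have hK : ellK ((a - b) / a) ≤ π / 2 * (1 + log a) := by
    refine (ellK_le hm0 hm1).trans ?_
    have : 1 / a ^ 2 ≤ 1 - (a - b) / a := by
      rw [show 1 - (a - b) / a = b / a by field_simp; ring, div_le_div_iff₀ (by positivity) ha]
      nlinarith
    have := log_le_log (by positivity) this
    rw [one_div, log_inv, log_pow] at this
    gcongr
    push_cast at this
    linarith
  have hlog : 0 ≤ log a := log_nonneg ha1.le
  rw [neg_two_mul_Phi1_eq ha]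
  calc _ ≤ √(1 + muGap a b / a) * (2 / (π * muGap a b) *
        (π / (2 * (1 / muGap a b)) * (1 / √(1 - s)) +
          π / 2 * (1 + log a) / ((a - b) / muGap a b * s))) := by
        gcongr
        exact hP.trans (by gcongr)
    _ = √(1 + muGap a b / a) * (1 / √(1 - s) + (1 + log a) / ((a - b) * s)) := by
        congr 1
        field_simp
    _ ≤ _ := by
        gcongr
        exact muGap_le_one hba.le

lemma continuousOn_Phi1 :
    ContinuousOn (fun p : ℝ × ℝ => Phi1 p.1 p.2) {p | 0 < p.2 ∧ p.2 ≤ p.1} := by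
  have hμ : Continuous fun p : ℝ × ℝ => muC p.1 p.2 := by unfold muC; fun_prop
  have ha : ∀ p ∈ {p : ℝ × ℝ | 0 < p.2 ∧ p.2 ≤ p.1}, 0 < p.1 := fun p hp => hp.1.trans_le hp.2
  have hden : ∀ p ∈ {p : ℝ × ℝ | 0 < p.2 ∧ p.2 ≤ p.1}, p.1 - muC p.1 p.2 ^ 2 ≠ 0 := fun p hp => by
    rw [sub_muC_sq (ha p hp).le]
    exact neg_ne_zero.2 (muGap_pos _ _).ne'
  have hmaps : Set.MapsTo
      (fun p : ℝ × ℝ => ((p.1 - p.2) / (p.1 - muC p.1 p.2 ^ 2), (p.1 - p.2) / p.1))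
      {p | 0 < p.2 ∧ p.2 ≤ p.1} {p | p.1 < 1 ∧ p.2 < 1} := by
    rintro ⟨a, b⟩ ⟨hb, hba⟩
    dsimp only at hb hba ⊢
    refine ⟨?_, (div_lt_one (hb.trans_le hba)).2 (by linarith)⟩
    rw [sub_muC_sq (hb.le.trans hba) b, div_neg, neg_lt]
    linarith [div_nonneg (sub_nonneg.2 hba) (muGap_pos a b).le]
  have hE := continuousOn_ellPi.comp (((continuous_fst.sub continuous_snd).continuousOn.div
    (continuous_fst.sub (hμ.pow 2)).continuousOn hden).prodMk
    ((continuous_fst.sub continuous_snd).continuousOn.div continuous_fst.continuousOn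
      fun p hp => (ha p hp).ne')) hmaps
  refine ContinuousOn.div (hμ.continuousOn.mul hE) (by fun_prop) fun p hp =>
    mul_ne_zero (mul_ne_zero pi_ne_zero (sqrt_pos.2 (ha p hp)).ne') (hden p hp)

lemma isClosed_Phi1_fiber (x : ℝ) :
    IsClosed {p : ℝ × ℝ | p.2 ≤ p.1 ∧ 0 < p.2 ∧ 1 ≤ p.1 * p.2 ∧ Phi1 p.1 p.2 = x} := by
  have hD : IsClosed {p : ℝ × ℝ | p.2 ≤ p.1 ∧ 0 ≤ p.2 ∧ 1 ≤ p.1 * p.2} :=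
    (isClosed_le continuous_snd continuous_fst).inter
      ((isClosed_le continuous_const continuous_snd).inter
        (isClosed_le continuous_const (continuous_fst.mul continuous_snd)))
  have hpos : ∀ p ∈ {p : ℝ × ℝ | p.2 ≤ p.1 ∧ 0 ≤ p.2 ∧ 1 ≤ p.1 * p.2}, 0 < p.2 :=
    fun p ⟨_, hb, hab⟩ => hb.lt_of_ne fun h => by rw [← h, mul_zero] at hab; linarith
  convert (continuousOn_Phi1.mono fun p hp => ⟨hpos p hp, hp.1⟩).preimage_isClosed_of_isClosed
    hD isClosed_singleton using 1
  ext p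
  exact ⟨fun ⟨h1, h2, h3, h4⟩ => ⟨⟨h1, h2.le, h3⟩, h4⟩,
    fun ⟨hp, h4⟩ => ⟨hp.1, hpos p hp, hp.2.2, h4⟩⟩

lemma eventually_neg_lt_Phi1 {y : ℝ} (hy : 1 / 2 < y) :
    ∀ᶠ a in atTop, ∀ b, 0 < b → b ≤ a → 1 ≤ a * b → -y < Phi1 a b := by
  -- any `θ ∈ (1/(4y²), 1)` works: the bounds in the regimes `θ a ≤ b` and `b < θ a` tend to
  -- `θ^(-1/2)` and to `1`, both less than `2y`
  set θ := 1 / (2 * y)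
  have hθ1 : θ < 1 := by rw [div_lt_one (by linarith)]; linarith
  have hinv : Tendsto (fun a : ℝ => 1 / a) atTop (𝓝 0) := tendsto_const_nhds.div_atTop tendsto_id
  have hinv_sqrt : Tendsto (fun a : ℝ => 1 / √a) atTop (𝓝 0) :=
    tendsto_const_nhds.div_atTop tendsto_sqrt_atTop
  have hlog : Tendsto (fun a => (1 + log a) / √a) atTop (𝓝 0) := by
    have := (isLittleO_log_rpow_atTop one_half_pos).tendsto_div_nhds_zero
    simp_rw [← sqrt_eq_rpow] at this
    simpa [add_div] using hinv_sqrt.add this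
  have hA : Tendsto (fun a => √((1 + 1 / a) / θ)) atTop (𝓝 √(2 * y)) := by
    have := ((tendsto_const_nhds (x := (1 : ℝ))).add hinv).div_const θ |>.sqrt
    rwa [add_zero, show 1 / θ = 2 * y by simp [θ]] at this
  have hB : Tendsto (fun a => √(1 + 1 / a) * (1 / √(1 - 1 / √a) + (1 + log a) / √a / (1 - θ)))
      atTop (𝓝 1) := by
    simpa using ((tendsto_const_nhds (x := (1 : ℝ))).add hinv).sqrt.mul
      (((tendsto_const_nhds (x := (1 : ℝ))).div
        ((tendsto_const_nhds (x := (1 : ℝ))).sub hinv_sqrt).sqrt (by simp)).add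
        (hlog.div_const _))
  have hA2y : √(2 * y) < 2 * y := by rw [sqrt_lt' (by linarith)]; nlinarith
  filter_upwards [hA.eventually (gt_mem_nhds hA2y),
    hB.eventually (gt_mem_nhds (show (1 : ℝ) < 2 * y by linarith)), eventually_gt_atTop 1]
    with a hAa hBa ha1 b hb hba hab
  suffices -2 * Phi1 a b < 2 * y by linarith
  rcases le_or_gt (θ * a) b with h | h
  · calc -2 * Phi1 a b ≤ √((a + 1) / b) := neg_two_mul_Phi1_le_sqrt_div hb hba
      _ ≤ √((1 + 1 / a) / θ) := by
          rw [show (1 + 1 / a) / θ = (a + 1) / (θ * a) by field_simp]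
          exact sqrt_le_sqrt (div_le_div_of_nonneg_left (by linarith) (by positivity) h)
      _ < 2 * y := hAa
  · have hsa : 0 < √a := sqrt_pos.2 (by linarith)
    have hs1 : 1 / √a < 1 := by rw [div_lt_one hsa]; exact lt_sqrt_of_sq_lt (by nlinarith)
    calc -2 * Phi1 a b
        ≤ √(1 + 1 / a) * (1 / √(1 - 1 / √a) + (1 + log a) / ((a - b) * (1 / √a))) :=
          neg_two_mul_Phi1_le_of_lt hb (by nlinarith) hab (by positivity) hs1
      _ ≤ √(1 + 1 / a) * (1 / √(1 - 1 / √a) + (1 + log a) / √a / (1 - θ)) := by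
          gcongr √(1 + 1 / a) * (_ + ?_)
          rw [div_div]
          refine div_le_div_of_nonneg_left (by linarith [log_nonneg ha1.le]) (by positivity) ?_
          rw [mul_one_div, le_div_iff₀ hsa]
          nlinarith [mul_self_sqrt (show 0 ≤ a by linarith)]
      _ < 2 * y := hBa

theorem stmt_13_general (x : ℝ) (hx2 : x < -(1/2)) :
    IsCompact {p : ℝ × ℝ |
      p.2 ≤ p.1 ∧ 0 < p.2 ∧ 1 ≤ p.1 * p.2 ∧ Phi1 p.1 p.2 = x} := by
  obtain ⟨M, hM⟩ := eventually_atTop.1 (eventually_neg_lt_Phi1 (y := -x) (by linarith))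
  refine (isCompact_Icc (a := ((0 : ℝ), (0 : ℝ))) (b := (M, M))).of_isClosed_subset
    (isClosed_Phi1_fiber x) ?_
  rintro ⟨a, b⟩ ⟨hba, hb, hab, rfl⟩
  have haM : a ≤ M := by
    by_contra! h
    linarith [hM a h.le b hb hba hab]
  exact ⟨⟨hb.le.trans hba, hb.le⟩, haM, hba.trans haM⟩

/-- For every real `x` with `-1/√2 < x < -1/2`, the set
`{(a,b) : a ≥ b > 0, ab ≥ 1, Φ₁(a,b) = x}` is compact. -/
theorem stmt_13 (x : ℝ) (hx1 : -(1 / Real.sqrt 2) < x) (hx2 : x < -(1/2)) :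
    IsCompact {p : ℝ × ℝ |
      p.2 ≤ p.1 ∧ 0 < p.2 ∧ 1 ≤ p.1 * p.2 ∧ Phi1 p.1 p.2 = x} :=
  stmt_13_general x hx2
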